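/- (Proof by cases on prelinearity.) Let α and β be sentences and φ a formula. If Γ ∪ {α → β} ⊢ φ and Γ ∪ {β → α} ⊢ φ, then Γ ⊢ φ. -/

import Mathlib

/-! ## Syntax of a countable predicate language and the logic `⊢` -/

/-- A countable predicate language: countably many constant symbols and
predicate symbols with arities. (Variables are indexed by `ℕ`.) -/
structure PredLanguage where
  Const : Type
  Pred : Type
  arity : Pred → ℕ
  const_countable : Countable Const
  pred_countable : Countable Pred

variable {L : PredLanguage}

/-- Terms: variables (indexed by `ℕ`) and constants. -/
inductive Term (L : PredLanguage) : Type
  | var : ℕ → Term L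
  | const : L.Const → Term L

/-- `t.usesVar x` : the variable `x` occurs in the term `t`. -/
def Term.usesVar (x : ℕ) : Term L → Prop
  | .var y => y = x
  | .const _ => False

/-- `t.usesConst c` : the constant `c` occurs in the term `t`. -/
def Term.usesConst (c : L.Const) : Term L → Prop
  | .var _ => False
  | .const d => d = c

/-- Substitution of the term `t` for the variable `x` in a term. -/
noncomputable def Term.substVar (x : ℕ) (t : Term L) : Term L → Term L
  | .var y => if y = x then t else .var y
  | .const d => .const d

open Classical in
/-- Replacing every occurrence of the constant `c` by the variable `x` in a term. -/
noncomputable def Term.substConst (c : L.Const) (x : ℕ) : Term L → Term L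
  | .var y => .var y
  | .const d => if d = c then .var x else .const d

/-- Formulas of the predicate language `L`: the propositional constant `0̄`, atomic
predicate formulas, the connectives `→` and `&`, and the quantifiers `∀` and `∃`. -/
inductive Formula (L : PredLanguage) : Type
  | bot : Formula L
  | pred : (P : L.Pred) → (Fin (L.arity P) → Term L) → Formula L
  | imp : Formula L → Formula L → Formula L
  | conj : Formula L → Formula L → Formula L
  | all : ℕ → Formula L → Formula L
  | ex : ℕ → Formula L → Formula L

namespace Formula

/-- `1̄ := 0̄ → 0̄`. -/
def one : Formula L := .imp .bot .bot

/-- `φ ∧ ψ := φ & (φ → ψ)`. -/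
def and (φ ψ : Formula L) : Formula L := .conj φ (.imp φ ψ)

/-- `φ ∨ ψ := ((φ→ψ)→ψ) ∧ ((ψ→φ)→φ)`. -/
def or (φ ψ : Formula L) : Formula L := and (.imp (.imp φ ψ) ψ) (.imp (.imp ψ φ) φ)

/-- `φⁿ`, the `n`-fold `&`-power of `φ`, with `φ⁰ = 1̄`. -/
def pow (φ : Formula L) : ℕ → Formula L
  | 0 => one
  | n + 1 => .conj φ (φ.pow n)

/-- `φ.freeIn x` : the variable `x` occurs free in `φ`. -/
def freeIn (x : ℕ) : Formula L → Prop
  | .bot => False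
  | .pred _ ts => ∃ i, (ts i).usesVar x
  | .imp φ ψ => φ.freeIn x ∨ ψ.freeIn x
  | .conj φ ψ => φ.freeIn x ∨ ψ.freeIn x
  | .all y φ => y ≠ x ∧ φ.freeIn x
  | .ex y φ => y ≠ x ∧ φ.freeIn x

/-- `φ.usesConst c` : the constant `c` occurs in `φ`. -/
def usesConst (c : L.Const) : Formula L → Prop
  | .bot => False
  | .pred _ ts => ∃ i, (ts i).usesConst c
  | .imp φ ψ => φ.usesConst c ∨ ψ.usesConst c
  | .conj φ ψ => φ.usesConst c ∨ ψ.usesConst c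
  | .all _ φ => φ.usesConst c
  | .ex _ φ => φ.usesConst c

/-- A sentence is a formula with no free variables. -/
def IsSentence (φ : Formula L) : Prop := ∀ x, ¬ φ.freeIn x

/-- `φ.substVar x t` : the result of substituting `t` for the free occurrences of `x` in `φ`. -/
noncomputable def substVar (x : ℕ) (t : Term L) : Formula L → Formula L
  | .bot => .bot
  | .pred P ts => .pred P fun i => (ts i).substVar x t
  | .imp φ ψ => .imp (φ.substVar x t) (ψ.substVar x t)
  | .conj φ ψ => .conj (φ.substVar x t) (ψ.substVar x t)
  | .all y φ => if y = x then .all y φ else .all y (φ.substVar x t)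
  | .ex y φ => if y = x then .ex y φ else .ex y (φ.substVar x t)

/-- `φ.substConst c x` : the result of replacing every occurrence of the constant `c`
by the variable `x` in `φ`. -/
noncomputable def substConst (c : L.Const) (x : ℕ) : Formula L → Formula L
  | .bot => .bot
  | .pred P ts => .pred P fun i => (ts i).substConst c x
  | .imp φ ψ => .imp (φ.substConst c x) (ψ.substConst c x)
  | .conj φ ψ => .conj (φ.substConst c x) (ψ.substConst c x)
  | .all y φ => .all y (φ.substConst c x)
  | .ex y φ => .ex y (φ.substConst c x)

/-- `Substitutable x t φ` : the term `t` is substitutable for the variable `x` in `φ`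
(no free occurrence of `x` lies in the scope of a quantifier binding a variable of `t`). -/
def Substitutable (x : ℕ) (t : Term L) : Formula L → Prop
  | .bot => True
  | .pred _ _ => True
  | .imp φ ψ => Substitutable x t φ ∧ Substitutable x t ψ
  | .conj φ ψ => Substitutable x t φ ∧ Substitutable x t ψ
  | .all y φ => ¬ (Formula.all y φ).freeIn x ∨ (¬ t.usesVar y ∧ Substitutable x t φ)
  | .ex y φ => ¬ (Formula.ex y φ).freeIn x ∨ (¬ t.usesVar y ∧ Substitutable x t φ)

end Formula

/-- The axiom schemata of the logic: Hájek's (A1)–(A8), the first-order schemata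
(∀1), (∃1), (∀2), (∃2), (Lin), and the schema (RC). -/
inductive IsAxiom : Formula L → Prop
  | a1 (φ ψ χ : Formula L) : IsAxiom (.imp (.imp φ ψ) (.imp (.imp ψ χ) (.imp φ χ)))
  | a2 (φ ψ : Formula L) : IsAxiom (.imp (.conj φ ψ) φ)
  | a3 (φ ψ : Formula L) : IsAxiom (.imp (.conj φ ψ) (.conj ψ φ))
  | a4 (φ ψ : Formula L) : IsAxiom (.imp (.conj φ (.imp φ ψ)) (.conj ψ (.imp ψ φ)))
  | a5 (φ ψ χ : Formula L) : IsAxiom (.imp (.imp φ (.imp ψ χ)) (.imp (.conj φ ψ) χ))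
  | a6 (φ ψ χ : Formula L) : IsAxiom (.imp (.imp (.conj φ ψ) χ) (.imp φ (.imp ψ χ)))
  | a7 (φ ψ χ : Formula L) :
      IsAxiom (.imp (.imp (.imp φ ψ) χ) (.imp (.imp (.imp ψ φ) χ) χ))
  | a8 (φ : Formula L) : IsAxiom (.imp .bot φ)
  | all1 (φ : Formula L) (x : ℕ) (t : Term L) (h : Formula.Substitutable x t φ) :
      IsAxiom (.imp (.all x φ) (φ.substVar x t))
  | ex1 (φ : Formula L) (x : ℕ) (t : Term L) (h : Formula.Substitutable x t φ) :
      IsAxiom (.imp (φ.substVar x t) (.ex x φ))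
  | all2 (φ ψ : Formula L) (x : ℕ) (h : ¬ φ.freeIn x) :
      IsAxiom (.imp (.all x (.imp φ ψ)) (.imp φ (.all x ψ)))
  | ex2 (φ ψ : Formula L) (x : ℕ) (h : ¬ φ.freeIn x) :
      IsAxiom (.imp (.all x (.imp ψ φ)) (.imp (.ex x ψ) φ))
  | lin (φ ψ : Formula L) (x : ℕ) (h : ¬ φ.freeIn x) :
      IsAxiom (.imp (.all x (ψ.or φ)) ((Formula.all x ψ).or φ))
  | rc (χ : Formula L) (x : ℕ) :
      IsAxiom (.imp (.all x (.conj χ χ)) (.conj (.all x χ) (.all x χ)))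

/-- `Deriv Γ φ` (written `Γ ⊢ φ`): `φ` has a (possibly infinite, well-founded,
i.e. ordinal-indexed) proof from `Γ` using the axioms, Modus Ponens, Generalization,
and the infinitary rule (Inf) for sentences `φ, α, β`. -/
inductive Deriv (Γ : Set (Formula L)) : Formula L → Prop
  | ax {φ : Formula L} : IsAxiom φ → Deriv Γ φ
  | hyp {φ : Formula L} : φ ∈ Γ → Deriv Γ φ
  | mp {φ ψ : Formula L} : Deriv Γ φ → Deriv Γ (.imp φ ψ) → Deriv Γ ψ
  | gen {φ : Formula L} {x : ℕ} : Deriv Γ φ → Deriv Γ (.all x φ)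
  | inf {φ α β : Formula L} : φ.IsSentence → α.IsSentence → β.IsSentence →
      (∀ n : ℕ, Deriv Γ (φ.or (.imp α (β.pow n)))) →
      Deriv Γ (φ.or (.imp α (.conj α β)))

/-!
No deduction theorem is available for this logic, so the two cases are combined by lifting
instead: if `τ` is a sentence, every derivation of `ψ` from `Γ ∪ {σ}` becomes, rule by rule, a
derivation of `τ ∨ ψ` from `Γ ∪ {τ ∨ σ}`. Generalization lifts through (Lin), and (Inf) after
reassociating the disjunction; both steps need `τ` to be closed. Starting from the
prelinearity theorem `(α → β) ∨ (β → α)`, a lift along `β → α` gives `Γ ⊢ (β → α) ∨ ∀̄φ`,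
and a second lift, along the universal closure `∀̄φ`, gives `Γ ⊢ ∀̄φ ∨ ∀̄φ`, hence `Γ ⊢ φ`.
-/

namespace Formula

variable {a b : Formula L}

theorem IsSentence.imp (ha : a.IsSentence) (hb : b.IsSentence) : (a.imp b).IsSentence :=
  fun x hx => hx.elim (ha x) (hb x)

theorem IsSentence.conj (ha : a.IsSentence) (hb : b.IsSentence) : (a.conj b).IsSentence :=
  fun x hx => hx.elim (ha x) (hb x)

theorem IsSentence.or (ha : a.IsSentence) (hb : b.IsSentence) : (a.or b).IsSentence :=
  ((ha.imp hb).imp hb).conj (((ha.imp hb).imp hb).imp ((hb.imp ha).imp ha))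

end Formula

namespace Deriv

variable {Γ : Set (Formula L)} {a b c d : Formula L}

theorem imp_trans (hab : Deriv Γ (a.imp b)) (hbc : Deriv Γ (b.imp c)) : Deriv Γ (a.imp c) :=
  hbc.mp (hab.mp (ax (.a1 a b c)))

theorem imp_const : Deriv Γ (a.imp (b.imp a)) :=
  (ax (.a2 a b)).mp (ax (.a6 a b a))

theorem conj_imp_elim : Deriv Γ ((a.conj (a.imp b)).imp b) :=
  (ax (.a4 a b)).imp_trans (ax (.a2 b (b.imp a)))

theorem imp_imp_imp_self : Deriv Γ (a.imp ((a.imp b).imp b)) :=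
  conj_imp_elim.mp (ax (.a6 a (a.imp b) b))

theorem one : Deriv Γ (Formula.one (L := L)) :=
  ax (.a8 .bot)

theorem imp_self : Deriv Γ (a.imp a) :=
  (imp_const (b := .one)).imp_trans (one.mp imp_imp_imp_self)

theorem imp_swap (h : Deriv Γ (a.imp (b.imp c))) : Deriv Γ (b.imp (a.imp c)) :=
  h.mp <| (ax (.a5 a b c)).imp_trans <|
    ((ax (.a3 b a)).mp (ax (.a1 (b.conj a) (a.conj b) c))).imp_trans (ax (.a6 b a c))

theorem imp_imp_imp (h : Deriv Γ (b.imp c)) : Deriv Γ ((a.imp b).imp (a.imp c)) :=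
  h.mp (imp_swap (ax (.a1 a b c)))

theorem imp_imp_conj_self : Deriv Γ ((a.imp b).imp (a.imp (a.conj (a.imp b)))) :=
  (ax (.a3 (a.imp b) a)).mp (ax (.a6 (a.imp b) a (a.conj (a.imp b))))

/-- Both cases of (A7) reduce to `a → b & (b → c)`: the case `c → b` through (A4). -/
theorem imp_and (hb : Deriv Γ (a.imp b)) (hc : Deriv Γ (a.imp c)) :
    Deriv Γ (a.imp (b.and c)) :=
  have case_bc : Deriv Γ ((b.imp c).imp (a.imp (b.conj (b.imp c)))) :=
    imp_imp_conj_self.imp_trans (hb.mp (ax (.a1 a b _)))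
  have case_cb : Deriv Γ ((c.imp b).imp (a.imp (b.conj (b.imp c)))) :=
    (imp_imp_conj_self.imp_trans (hc.mp (ax (.a1 a c _)))).imp_trans
      (imp_imp_imp (ax (.a4 c b)))
  case_cb.mp (case_bc.mp (ax (.a7 b c _)))

theorem or_inl : Deriv Γ (a.imp (a.or b)) :=
  imp_and imp_imp_imp_self imp_const

theorem or_inr : Deriv Γ (b.imp (a.or b)) :=
  imp_and imp_const imp_imp_imp_self

theorem or_elim (hac : Deriv Γ (a.imp c)) (hbc : Deriv Γ (b.imp c)) :
    Deriv Γ ((a.or b).imp c) :=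
  have case_ab : Deriv Γ ((a.imp b).imp ((a.or b).imp c)) :=
    imp_imp_imp_self.imp_trans <|
      ((ax (.a2 _ _)).mp (ax (.a1 _ _ b))).imp_trans (imp_imp_imp hbc)
  have case_ba : Deriv Γ ((b.imp a).imp ((a.or b).imp c)) :=
    imp_imp_imp_self.imp_trans <|
      (conj_imp_elim.mp (ax (.a1 _ _ a))).imp_trans (imp_imp_imp hac)
  case_ba.mp (case_ab.mp (ax (.a7 a b _)))

theorem or_comm : Deriv Γ ((a.or b).imp (b.or a)) :=
  or_elim or_inr or_inl

theorem or_self : Deriv Γ ((a.or a).imp a) :=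
  or_elim imp_self imp_self

theorem or_assoc : Deriv Γ (((a.or b).or c).imp (a.or (b.or c))) :=
  or_elim (or_elim or_inl (or_inl.imp_trans or_inr)) (or_inr.imp_trans or_inr)

theorem or_assoc' : Deriv Γ ((a.or (b.or c)).imp ((a.or b).or c)) :=
  or_elim (or_inl.imp_trans or_inl) (or_elim (or_inr.imp_trans or_inl) or_inr)

theorem prelin : Deriv Γ ((a.imp b).or (b.imp a)) :=
  or_inr.mp (or_inl.mp (ax (.a7 a b _)))

theorem or_mp (ha : Deriv Γ (c.or a)) (hab : Deriv Γ (c.or (a.imp b))) : Deriv Γ (c.or b) :=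
  have left : Deriv Γ (c.imp ((c.or (a.imp b)).imp (c.or b))) :=
    or_inl.imp_trans imp_const
  have right : Deriv Γ ((c.or (a.imp b)).imp (a.imp (c.or b))) :=
    or_elim (or_inl.imp_trans imp_const) (imp_imp_imp or_inr)
  hab.mp (ha.mp (or_elim left (imp_swap right)))

theorem cut (hc : Deriv Γ c) (h : Deriv (Γ ∪ {c}) a) : Deriv Γ a := by
  induction h with
  | ax h => exact ax h
  | hyp h =>
    rcases h with h | rfl
    · exact hyp h
    · exact hc
  | mp _ _ ih₁ ih₂ => exact ih₁.mp ih₂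
  | gen _ ih => exact ih.gen
  | inf hs ha hb _ ih => exact inf hs ha hb ih

theorem or_lift (hc : c.IsSentence) (h : Deriv (Γ ∪ {d}) a) :
    Deriv (Γ ∪ {c.or d}) (c.or a) := by
  induction h with
  | ax h => exact (ax h).mp or_inr
  | hyp h =>
    rcases h with h | rfl
    · exact (hyp (Or.inl h)).mp or_inr
    · exact hyp (Or.inr rfl)
  | mp _ _ ih₁ ih₂ => exact or_mp ih₁ ih₂
  | @gen φ x _ ih => exact ((ih.mp or_comm).gen.mp (ax (.lin c φ x (hc x)))).mp or_comm
  | inf hs ha hb _ ih => exact (inf (hc.or hs) ha hb fun n => (ih n).mp or_assoc').mp or_assoc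

end Deriv

def Term.vars : Term L → List ℕ
  | .var y => [y]
  | .const _ => []

theorem Term.mem_vars_of_usesVar {x : ℕ} : ∀ {t : Term L}, t.usesVar x → x ∈ t.vars
  | .var _, rfl => List.mem_singleton_self _

namespace Formula

def vars : Formula L → List ℕ
  | .bot => []
  | .pred P ts => (List.finRange (L.arity P)).flatMap fun i => (ts i).vars
  | .imp a b => a.vars ++ b.vars
  | .conj a b => a.vars ++ b.vars
  | .all _ a => a.vars
  | .ex _ a => a.vars

theorem mem_vars_of_freeIn {x : ℕ} : ∀ {φ : Formula L}, φ.freeIn x → x ∈ φ.vars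
  | .pred _ _, ⟨i, hi⟩ => List.mem_flatMap.2 ⟨i, List.mem_finRange i, Term.mem_vars_of_usesVar hi⟩
  | .imp _ _, h | .conj _ _, h => List.mem_append.2 (h.imp mem_vars_of_freeIn mem_vars_of_freeIn)
  | .all _ a, h | .ex _ a, h => mem_vars_of_freeIn (φ := a) h.2

def close (l : List ℕ) (φ : Formula L) : Formula L :=
  l.foldr .all φ

theorem freeIn_close {x : ℕ} {φ : Formula L} :
    ∀ {l : List ℕ}, (φ.close l).freeIn x → φ.freeIn x ∧ x ∉ l
  | [], h => ⟨h, List.not_mem_nil⟩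
  | _ :: _, ⟨hyx, h⟩ => ⟨(freeIn_close h).1, List.not_mem_cons_of_ne_of_not_mem
      (Ne.symm hyx) (freeIn_close h).2⟩

theorem isSentence_close_vars (φ : Formula L) : (φ.close φ.vars).IsSentence :=
  fun _ h => (freeIn_close h).2 (mem_vars_of_freeIn (freeIn_close h).1)

theorem substVar_var_self (x : ℕ) : ∀ φ : Formula L, φ.substVar x (.var x) = φ
  | .bot => rfl
  | .pred P ts => by
    simp only [substVar]
    congr
    funext i
    cases ts i <;> simp [Term.substVar]
  | .imp a b | .conj a b => by simp only [substVar, substVar_var_self x a, substVar_var_self x b]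
  | .all y a | .ex y a => by simp [substVar, substVar_var_self x a]

theorem substitutable_var_self (x : ℕ) : ∀ φ : Formula L, Substitutable x (.var x) φ
  | .bot | .pred _ _ => trivial
  | .imp a b | .conj a b => ⟨substitutable_var_self x a, substitutable_var_self x b⟩
  | .all y a | .ex y a => by
    by_cases h : y = x
    · exact Or.inl fun hf => hf.1 h
    · exact Or.inr ⟨Ne.symm h, substitutable_var_self x a⟩

end Formula

namespace Deriv

variable {Γ : Set (Formula L)} {φ : Formula L}

theorem of_all {x : ℕ} (h : Deriv Γ (.all x φ)) : Deriv Γ φ := by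
  simpa only [Formula.substVar_var_self] using
    h.mp (ax (.all1 φ x (.var x) (Formula.substitutable_var_self x φ)))

theorem close (h : Deriv Γ φ) : ∀ l : List ℕ, Deriv Γ (φ.close l)
  | [] => h
  | _ :: l => (close h l).gen

theorem of_close : ∀ {l : List ℕ}, Deriv Γ (φ.close l) → Deriv Γ φ
  | [], h => h
  | _ :: _, h => of_close h.of_all

end Deriv

theorem Deriv.by_cases_or {Γ : Set (Formula L)} {σ τ φ : Formula L} (hτ : τ.IsSentence)
    (h : Deriv Γ (σ.or τ)) (hσφ : Deriv (Γ ∪ {σ}) φ) (hτφ : Deriv (Γ ∪ {τ}) φ) : Deriv Γ φ :=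
  let ψ := φ.close φ.vars
  have hψ : ψ.IsSentence := φ.isSentence_close_vars
  have h_τψ : Deriv Γ (τ.or ψ) := (h.mp or_comm).cut ((hσφ.close _).or_lift hτ)
  have h_ψψ : Deriv Γ (ψ.or ψ) := (h_τψ.mp or_comm).cut ((hτφ.close _).or_lift hψ)
  (h_ψψ.mp or_self).of_close

/-- proof by cases on prelinearity: if `α` and `β` are sentences,
`Γ ∪ {α → β} ⊢ φ` and `Γ ∪ {β → α} ⊢ φ`, then `Γ ⊢ φ`. -/
theorem prelinearity_cases (L : PredLanguage) (Γ : Set (Formula L)) (α β φ : Formula L)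
    (hα : α.IsSentence) (hβ : β.IsSentence)
    (h1 : Deriv (Γ ∪ {Formula.imp α β}) φ) (h2 : Deriv (Γ ∪ {Formula.imp β α}) φ) :
    Deriv Γ φ :=
  Deriv.prelin.by_cases_or (hβ.imp hα) h1 h2
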